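/- For c ∈ {0,1}, the shuffle regularization commutes with ∂_{z,c}: ∂_{z,c}(reg_⧢(w)) = reg_⧢(∂_{z,c}(w)) for all w ∈ A_z^1. -/

import Mathlib

open scoped BigOperators

/-- Letters: `0 ↦ e₀`, `1 ↦ e₁`, `2 ↦ e_z`. -/
abbrev Letter := Fin 3

/-- The free noncommutative ring `𝒜_z = ℤ⟨e₀, e₁, e_z⟩`. -/
abbrev Az := MonoidAlgebra ℤ (FreeMonoid Letter)

/-- The monomial (word) corresponding to a list of letters. -/
noncomputable def wordOf (l : List Letter) : Az :=
  MonoidAlgebra.single (FreeMonoid.ofList l) 1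

/-- The extended sequence `a₀ = 0, a₁, …, a_n, a_{n+1} = 1`. -/
def ext (a : List Letter) (j : ℕ) : Letter :=
  ((0 : Letter) :: a ++ [1]).getD j 1

/-- `∂_{α,β}` on a word. -/
noncomputable def Dword (α β : Letter) (a : List Letter) : Az :=
  ∑ i ∈ Finset.range a.length,
    (((if ({ext a (i + 1), ext a (i + 2)} : Finset Letter) = {α, β} then 1 else 0)
      - (if ({ext a i, ext a (i + 1)} : Finset Letter) = {α, β} then 1 else 0) : ℤ))
      • wordOf (a.eraseIdx i)

/-- The linear operator `∂_{α,β} : 𝒜_z → 𝒜_z`. -/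
noncomputable def del (α β : Letter) : Az →ₗ[ℤ] Az :=
  (Finsupp.lsum ℤ fun w => LinearMap.toSpanSingleton ℤ Az (Dword α β (FreeMonoid.toList w))) ∘ₗ (MonoidAlgebra.coeffLinearEquiv ℤ).toLinearMap

/-- The shuffle product of two words. -/
noncomputable def shuffleWord : List Letter → List Letter → Az
  | [], v => wordOf v
  | u, [] => wordOf u
  | a :: u, b :: v =>
      wordOf [a] * shuffleWord u (b :: v) + wordOf [b] * shuffleWord (a :: u) v
termination_by u v => u.length + v.length

/-- The shuffle product as a bilinear map on `𝒜_z`. -/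
noncomputable def sh : Az →ₗ[ℤ] Az →ₗ[ℤ] Az :=
  (Finsupp.lsum ℤ fun u => LinearMap.toSpanSingleton ℤ (Az →ₗ[ℤ] Az)
    ((Finsupp.lsum ℤ fun v =>
      LinearMap.toSpanSingleton ℤ Az (shuffleWord (FreeMonoid.toList u) (FreeMonoid.toList v))) ∘ₗ (MonoidAlgebra.coeffLinearEquiv ℤ).toLinearMap)) ∘ₗ (MonoidAlgebra.coeffLinearEquiv ℤ).toLinearMap

/-- The (generalized) stuffle product of two words (the left word should lie in `𝒜`). -/
noncomputable def stWord : List Letter → List Letter → Az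
  | [], v => wordOf v
  | u, [] => wordOf u
  | a :: u, b :: v =>
      if a = 0 then wordOf [0] * stWord u (b :: v)
      else if a = 1 then
        wordOf [b] * (stWord u (b :: v) + stWord (a :: u) v - wordOf [0] * stWord u v)
      else 0
termination_by u v => u.length + v.length

/-- The stuffle product as a bilinear map. -/
noncomputable def st : Az →ₗ[ℤ] Az →ₗ[ℤ] Az :=
  (Finsupp.lsum ℤ fun u => LinearMap.toSpanSingleton ℤ (Az →ₗ[ℤ] Az)
    ((Finsupp.lsum ℤ fun v =>
      LinearMap.toSpanSingleton ℤ Az (stWord (FreeMonoid.toList u) (FreeMonoid.toList v))) ∘ₗ (MonoidAlgebra.coeffLinearEquiv ℤ).toLinearMap)) ∘ₗ (MonoidAlgebra.coeffLinearEquiv ℤ).toLinearMap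

/-- `Const` kills every word containing the letter `e_z`. -/
noncomputable def Const : Az →ₗ[ℤ] Az :=
  (Finsupp.lsum ℤ fun w => LinearMap.toSpanSingleton ℤ Az
    (if (2 : Letter) ∈ FreeMonoid.toList w then 0 else wordOf (FreeMonoid.toList w))) ∘ₗ (MonoidAlgebra.coeffLinearEquiv ℤ).toLinearMap

/-- `τ_z` on letters. -/
noncomputable def tauLetter (a : Letter) : Az :=
  if a = 0 then wordOf [2] - wordOf [1]
  else if a = 1 then wordOf [2] - wordOf [0]
  else wordOf [2]

/-- `τ_z` on a word (reversing the word). -/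
noncomputable def tauWord : List Letter → Az
  | [] => 1
  | a :: u => tauWord u * tauLetter a

/-- The duality anti-automorphism `τ_z`. -/
noncomputable def tau : Az →ₗ[ℤ] Az :=
  (Finsupp.lsum ℤ fun w => LinearMap.toSpanSingleton ℤ Az (tauWord (FreeMonoid.toList w))) ∘ₗ (MonoidAlgebra.coeffLinearEquiv ℤ).toLinearMap

/-- `𝒜_z^0`: span of the empty word and of words beginning with `e₁` or `e_z`
and ending in `e₀` or `e_z`. -/
noncomputable def Az0 : Submodule ℤ Az :=
  Submodule.span ℤ {x | ∃ l : List Letter,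
    (l = [] ∨ (l.head? ≠ some 0 ∧ l.getLast? ≠ some 1)) ∧ x = wordOf l}

/-- `𝒜_z^1`: span of the empty word and of words beginning with `e₁` or `e_z`. -/
noncomputable def Az1 : Submodule ℤ Az :=
  Submodule.span ℤ {x | ∃ l : List Letter, l.head? ≠ some 0 ∧ x = wordOf l}

/-- `𝒜 = ℤ⟨e₀, e₁⟩` inside `𝒜_z`. -/
noncomputable def Asub : Submodule ℤ Az :=
  Submodule.span ℤ {x | ∃ l : List Letter, (2 : Letter) ∉ l ∧ x = wordOf l}

/-- `𝒜^1 = ℤ ⊕ e₁𝒜`. -/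
noncomputable def A1sub : Submodule ℤ Az :=
  Submodule.span ℤ {x | ∃ l : List Letter,
    ((2 : Letter) ∉ l ∧ l.head? ≠ some 0 ∧ l.head? ≠ some 2) ∧ x = wordOf l}

/-- `𝒜^0 = ℤ ⊕ e₁𝒜e₀`. -/
noncomputable def A0sub : Submodule ℤ Az :=
  Submodule.span ℤ {x | ∃ l : List Letter,
    ((2 : Letter) ∉ l ∧ (l = [] ∨ (l.head? = some 1 ∧ l.getLast? = some 0))) ∧ x = wordOf l}

/-- `𝒜_z^{-2} = ℤ ⊕ e₁𝒜_z e₀ ⊕ e_z 𝒜_z e₀`. -/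
noncomputable def Azm2 : Submodule ℤ Az :=
  Submodule.span ℤ {x | ∃ l : List Letter,
    (l = [] ∨ (l.head? ≠ some 0 ∧ l.getLast? = some 0)) ∧ x = wordOf l}

/-- `𝒜_z^0 ∩ ℤ⟨e₁, e_z⟩`. -/
noncomputable def Wsub : Submodule ℤ Az :=
  Submodule.span ℤ {x | ∃ l : List Letter,
    ((0 : Letter) ∉ l ∧ (l = [] ∨ l.getLast? = some 2)) ∧ x = wordOf l}

/-- `ℤ⟨e_z⟩`: span of powers of `e_z`. -/
noncomputable def Zez : Submodule ℤ Az :=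
  Submodule.span ℤ {x | ∃ k : ℕ, x = wordOf (List.replicate k 2)}

/-- `𝒜_z^{-1} = 𝒜_z^{-2}·ℤ⟨e_z⟩`. -/
noncomputable def Azm1 : Submodule ℤ Az :=
  Submodule.span ℤ {x | ∃ l : List Letter, ∃ k : ℕ,
    (l = [] ∨ (l.head? ≠ some 0 ∧ l.getLast? = some 0)) ∧ x = wordOf (l ++ List.replicate k 2)}

/-- `ℤ⟨e₀, e_z⟩ ∩ 𝒜_z^0`. -/
noncomputable def Vsub : Submodule ℤ Az :=
  Submodule.span ℤ {x | ∃ l : List Letter,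
    ((1 : Letter) ∉ l ∧ (l = [] ∨ l.head? = some 2)) ∧ x = wordOf l}

/-- All lists of length `r` with entries in `{e₀, e_z}`. -/
def tuples : ℕ → List (List Letter)
  | 0 => [[]]
  | n + 1 => (tuples n).flatMap fun t => [(0 : Letter) :: t, (2 : Letter) :: t]

/-- `∂_{1,b₁} ∘ ⋯ ∘ ∂_{1,b_r}` for `bs = [b₁, …, b_r]`. -/
noncomputable def delChain : List Letter → Az →ₗ[ℤ] Az
  | [] => LinearMap.id
  | b :: bs => (del 1 b).comp (delChain bs)

/-- `∂_{z,α₁} ∘ ⋯ ∘ ∂_{z,α_r}` for `as = [α₁, …, α_r]`. -/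
noncomputable def delZChain : List Letter → Az →ₗ[ℤ] Az
  | [] => LinearMap.id
  | a :: as => (del 2 a).comp (delZChain as)

/-- `φ_⧢` on a word. -/
noncomputable def phiShWord (l : List Letter) : Az :=
  ∑ r ∈ Finset.range (l.length + 1),
    ((tuples r).map fun b => sh (Const (delChain b (wordOf l))) (wordOf b)).sum

/-- `φ_⧢ : 𝒜_z^0 → 𝒜_z^0` (defined on all of `𝒜_z`). -/
noncomputable def phiSh : Az →ₗ[ℤ] Az :=
  (Finsupp.lsum ℤ fun w => LinearMap.toSpanSingleton ℤ Az (phiShWord (FreeMonoid.toList w))) ∘ₗ (MonoidAlgebra.coeffLinearEquiv ℤ).toLinearMap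

/-- `φ_*` on a word. -/
noncomputable def phiStWord (l : List Letter) : Az :=
  ∑ r ∈ Finset.range (l.length + 1),
    ((tuples r).map fun b => st (Const (delChain b (wordOf l))) (wordOf b)).sum

/-- `φ_* : 𝒜_z^0 → 𝒜_z^0` (defined on all of `𝒜_z`). -/
noncomputable def phiSt : Az →ₗ[ℤ] Az :=
  (Finsupp.lsum ℤ fun w => LinearMap.toSpanSingleton ℤ Az (phiStWord (FreeMonoid.toList w))) ∘ₗ (MonoidAlgebra.coeffLinearEquiv ℤ).toLinearMap

/-- `φ_⊗` on a word. -/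
noncomputable def phiTWord (l : List Letter) : TensorProduct ℤ Az Az :=
  ∑ r ∈ Finset.range (l.length + 1),
    ((tuples r).map fun b => (Const (delChain b (wordOf l))) ⊗ₜ[ℤ] (wordOf b)).sum

/-- `φ_⊗ : 𝒜_z^0 → 𝒜^0 ⊗ ℤ⟨e₀, e_z⟩` (defined on all of `𝒜_z`). -/
noncomputable def phiT : Az →ₗ[ℤ] TensorProduct ℤ Az Az :=
  (Finsupp.lsum ℤ fun w => LinearMap.toSpanSingleton ℤ (TensorProduct ℤ Az Az)
    (phiTWord (FreeMonoid.toList w))) ∘ₗ (MonoidAlgebra.coeffLinearEquiv ℤ).toLinearMap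

/-- The `i`-fold shuffle power of `e₁`. -/
noncomputable def e1pow : ℕ → Az
  | 0 => 1
  | n + 1 => sh (wordOf [1]) (e1pow n)

/-- Substitution `z → 1` on words. -/
noncomputable def subst1 : Az →ₗ[ℤ] Az :=
  (Finsupp.lsum ℤ fun w => LinearMap.toSpanSingleton ℤ Az
    (wordOf ((FreeMonoid.toList w).map fun a => if a = 2 then 1 else a))) ∘ₗ (MonoidAlgebra.coeffLinearEquiv ℤ).toLinearMap

/-!
Both `∂_{z,c}` and the map `D : u e₁ ↦ u` (killing the words that do not end in `e₁`) are
derivations of `⧢`. As `D e₁ = 1`, this gives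
`D^k (f ⧢ e₁^{⧢ i}) = i (i-1) ⋯ (i-k+1) f ⧢ e₁^{⧢ (i-k)}` whenever `D f = 0`, so applying
`D^K` for the top index `K` shows that a decomposition `Σ f_i ⧢ e₁^{⧢ i}` with all `D f_i = 0`,
in particular with all `f_i ∈ 𝒜_z^0`, is unique. Now `∂_{z,c}` kills `e₁`, hence every
`e₁^{⧢ i}`, and maps words not ending in `e₁` to combinations of such words, so
`∂_{z,c} w = Σ ∂_{z,c} f_i ⧢ e₁^{⧢ i}` is such a decomposition and its constant term
`∂_{z,c} f₀` must be `g₀`.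
-/

lemma wordOf_nil : wordOf [] = 1 := rfl

lemma single_eq_smul_wordOf (m : FreeMonoid Letter) (n : ℤ) :
    MonoidAlgebra.single m n = n • wordOf (FreeMonoid.toList m) := by
  rw [wordOf, FreeMonoid.ofList_toList, MonoidAlgebra.smul_single, smul_eq_mul, mul_one]

theorem linearMap_ext_wordOf {M : Type*} [AddCommGroup M] [Module ℤ M] {φ ψ : Az →ₗ[ℤ] M}
    (h : ∀ l, φ (wordOf l) = ψ (wordOf l)) : φ = ψ := by
  refine LinearMap.ext fun x => ?_
  induction x using MonoidAlgebra.induction_linear with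
  | zero => rw [map_zero, map_zero]
  | add x y hx hy => rw [map_add, map_add, hx, hy]
  | single m n => rw [single_eq_smul_wordOf, φ.map_smul, ψ.map_smul, h]

theorem linearMap_ext₂_wordOf {M : Type*} [AddCommGroup M] [Module ℤ M]
    {φ ψ : Az →ₗ[ℤ] Az →ₗ[ℤ] M}
    (h : ∀ u v, φ (wordOf u) (wordOf v) = ψ (wordOf u) (wordOf v)) : φ = ψ :=
  linearMap_ext_wordOf fun u => linearMap_ext_wordOf (h u)

theorem shuffle_induction {Q : List Letter → List Letter → Prop} (nil_left : ∀ v, Q [] v)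
    (nil_right : ∀ u, Q u [])
    (cons_cons : ∀ a b u v, Q u (b :: v) → Q (a :: u) v → Q (a :: u) (b :: v)) :
    ∀ u v, Q u v := by
  intro u
  induction u with
  | nil => exact nil_left
  | cons a u ihu =>
    intro v
    induction v with
    | nil => exact nil_right _
    | cons b v ihv => exact cons_cons a b u v (ihu _) ihv

noncomputable def prepend (a : Letter) : Az →ₗ[ℤ] Az := LinearMap.mulLeft ℤ (wordOf [a])

lemma prepend_wordOf (a : Letter) (l : List Letter) : prepend a (wordOf l) = wordOf (a :: l) := by
  rw [prepend, LinearMap.mulLeft_apply, wordOf, wordOf, wordOf, MonoidAlgebra.single_mul_single,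
    one_mul]
  rfl

lemma sh_wordOf (u v : List Letter) : sh (wordOf u) (wordOf v) = shuffleWord u v := by
  simp [sh, wordOf]

lemma shuffleWord_nil_right (u : List Letter) : shuffleWord u [] = wordOf u := by
  cases u with
  | nil => rw [shuffleWord]
  | cons a u => rw [shuffleWord]; exact List.cons_ne_nil a u

lemma sh_wordOf_cons_cons (a b : Letter) (u v : List Letter) :
    sh (wordOf (a :: u)) (wordOf (b :: v)) =
      prepend a (sh (wordOf u) (wordOf (b :: v))) +
        prepend b (sh (wordOf (a :: u)) (wordOf v)) := by
  simp only [sh_wordOf, shuffleWord, prepend, LinearMap.mulLeft_apply]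

lemma sh_one_left (x : Az) : sh 1 x = x :=
  LinearMap.congr_fun (linearMap_ext_wordOf (φ := sh 1) (ψ := LinearMap.id) fun l => by
    rw [← wordOf_nil, sh_wordOf, shuffleWord, LinearMap.id_apply]) x

lemma sh_one_right (x : Az) : sh x 1 = x :=
  LinearMap.congr_fun (linearMap_ext_wordOf (φ := sh.flip 1) (ψ := LinearMap.id) fun l => by
    rw [LinearMap.flip_apply, ← wordOf_nil, sh_wordOf, shuffleWord_nil_right,
      LinearMap.id_apply]) x

lemma sh_comm (x y : Az) : sh x y = sh y x := by
  have hwords : ∀ u v, shuffleWord u v = shuffleWord v u := by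
    refine shuffle_induction (fun v => ?_) (fun u => ?_) fun a b u v ih₁ ih₂ => ?_
    · rw [shuffleWord_nil_right, shuffleWord]
    · rw [shuffleWord_nil_right, shuffleWord]
    · rw [shuffleWord, shuffleWord, ih₁, ih₂, add_comm]
  exact LinearMap.congr_fun₂ (linearMap_ext₂_wordOf (φ := sh) (ψ := sh.flip) fun u v => by
    rw [LinearMap.flip_apply, sh_wordOf, sh_wordOf, hwords]) x y

lemma sh_prepend_prepend (a b : Letter) (x y : Az) :
    sh (prepend a x) (prepend b y) =
      prepend a (sh x (prepend b y)) + prepend b (sh (prepend a x) y) := by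
  have key : sh.compl₁₂ (prepend a) (prepend b) =
      (sh.compl₂ (prepend b)).compr₂ (prepend a) + (sh ∘ₗ prepend a).compr₂ (prepend b) :=
    linearMap_ext₂_wordOf fun u v => by
      simpa only [LinearMap.compl₁₂_apply, LinearMap.add_apply, LinearMap.compr₂_apply,
        LinearMap.compl₂_apply, LinearMap.comp_apply, prepend_wordOf] using
        sh_wordOf_cons_cons a b u v
  simpa only [LinearMap.compl₁₂_apply, LinearMap.add_apply, LinearMap.compr₂_apply,
    LinearMap.compl₂_apply, LinearMap.comp_apply] using LinearMap.congr_fun₂ key x y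

def IsShuffleDerivation (D : Az →ₗ[ℤ] Az) : Prop :=
  ∀ x y, D (sh x y) = sh (D x) y + sh x (D y)

namespace IsShuffleDerivation

variable {D : Az →ₗ[ℤ] Az}

theorem of_wordOf
    (h : ∀ u v, D (sh (wordOf u) (wordOf v)) =
      sh (D (wordOf u)) (wordOf v) + sh (wordOf u) (D (wordOf v))) :
    IsShuffleDerivation D := fun x y =>
  LinearMap.congr_fun₂ (linearMap_ext₂_wordOf (φ := sh.compr₂ D) (ψ := sh ∘ₗ D + sh.compl₂ D)
    fun u v => by simpa using h u v) x y

theorem map_one (hD : IsShuffleDerivation D) : D 1 = 0 := by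
  simpa [sh_one_left, sh_one_right] using hD 1 1

theorem map_e1pow_eq_zero (hD : IsShuffleDerivation D) (h₁ : D (wordOf [1]) = 0) (n : ℕ) :
    D (e1pow n) = 0 := by
  induction n with
  | zero => exact hD.map_one
  | succ n ih => rw [e1pow, hD, h₁, ih, map_zero, map_zero, LinearMap.zero_apply, zero_add]

end IsShuffleDerivation

noncomputable def constCoeff : Az →ₗ[ℤ] ℤ :=
  Finsupp.lapply 1 ∘ₗ (MonoidAlgebra.coeffLinearEquiv ℤ).toLinearMap

lemma constCoeff_wordOf (l : List Letter) : constCoeff (wordOf l) = if l = [] then 1 else 0 := by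
  classical
  change Finsupp.single (FreeMonoid.ofList l) (1 : ℤ) (FreeMonoid.ofList []) = _
  rw [Finsupp.single_apply]
  exact if_congr FreeMonoid.ofList.injective.eq_iff rfl rfl

lemma constCoeff_prepend (a : Letter) (x : Az) : constCoeff (prepend a x) = 0 :=
  LinearMap.congr_fun (linearMap_ext_wordOf (φ := constCoeff ∘ₗ prepend a) (ψ := 0) fun l => by
    simp [prepend_wordOf, constCoeff_wordOf]) x

lemma constCoeff_sh_prepend (x : Az) (b : Letter) (y : Az) :
    constCoeff (sh x (prepend b y)) = 0 :=
  LinearMap.congr_fun (linearMap_ext_wordOf (φ := constCoeff ∘ₗ sh.flip (prepend b y)) (ψ := 0)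
    fun l => by
      cases l with
      | nil => simp [wordOf_nil, sh_one_left, constCoeff_prepend]
      | cons a u => simp [← prepend_wordOf, sh_prepend_prepend, constCoeff_prepend]) x

lemma constCoeff_prepend_sh (a : Letter) (x y : Az) : constCoeff (sh (prepend a x) y) = 0 := by
  rw [sh_comm, constCoeff_sh_prepend]

noncomputable def dropLastOne : Az →ₗ[ℤ] Az :=
  (Finsupp.lsum ℤ fun w => LinearMap.toSpanSingleton ℤ Az
    (if (FreeMonoid.toList w).getLast? = some 1 then wordOf (FreeMonoid.toList w).dropLast
      else 0)) ∘ₗ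
    (MonoidAlgebra.coeffLinearEquiv ℤ).toLinearMap

lemma dropLastOne_wordOf (l : List Letter) :
    dropLastOne (wordOf l) = if l.getLast? = some 1 then wordOf l.dropLast else 0 := by
  simp only [dropLastOne, wordOf, LinearMap.coe_comp, Function.comp_apply, LinearEquiv.coe_coe,
    MonoidAlgebra.coeffLinearEquiv_apply, MonoidAlgebra.coeff_single, Finsupp.coe_lsum,
    Finsupp.sum_single_index, LinearMap.toSpanSingleton_apply, zero_smul, one_smul,
    FreeMonoid.toList_ofList]
  rfl

lemma dropLastOne_one : dropLastOne 1 = 0 := by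
  rw [← wordOf_nil, dropLastOne_wordOf]
  rfl

lemma dropLastOne_wordOf_one : dropLastOne (wordOf [1]) = 1 := by
  simp [dropLastOne_wordOf, wordOf_nil]

lemma dropLastOne_prepend (a : Letter) (x : Az) :
    dropLastOne (prepend a x) =
      prepend a (dropLastOne x) + if a = 1 then constCoeff x • 1 else 0 := by
  have key : dropLastOne ∘ₗ prepend a =
      prepend a ∘ₗ dropLastOne + if a = 1 then constCoeff.smulRight 1 else 0 :=
    linearMap_ext_wordOf fun l => by
      simp only [LinearMap.comp_apply, LinearMap.add_apply, DFunLike.ite_apply,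
        LinearMap.smulRight_apply, constCoeff_wordOf, prepend_wordOf, dropLastOne_wordOf]
      cases l <;> split_ifs <;> simp_all [prepend_wordOf, wordOf_nil]
  simpa [DFunLike.ite_apply] using LinearMap.congr_fun key x

theorem isShuffleDerivation_dropLastOne : IsShuffleDerivation dropLastOne := by
  refine .of_wordOf (shuffle_induction (fun v => ?_) (fun u => ?_) fun a b u v ih₁ ih₂ => ?_)
  · rw [wordOf_nil, sh_one_left, dropLastOne_one, map_zero, LinearMap.zero_apply, zero_add,
      sh_one_left]
  · rw [wordOf_nil, sh_one_right, dropLastOne_one, map_zero, add_zero, sh_one_right]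
  · simp only [← prepend_wordOf] at ih₁ ih₂ ⊢
    rw [sh_prepend_prepend, map_add, dropLastOne_prepend, dropLastOne_prepend,
      constCoeff_sh_prepend, constCoeff_prepend_sh, ih₁, ih₂, dropLastOne_prepend,
      dropLastOne_prepend]
    simp only [map_add, LinearMap.add_apply, sh_prepend_prepend, zero_smul, ite_self, add_zero]
    split_ifs <;> simp only [map_smul, map_zero, LinearMap.smul_apply, LinearMap.zero_apply,
      sh_one_left, sh_one_right, add_zero] <;> abel

lemma dropLastOne_e1pow (n : ℕ) : dropLastOne (e1pow n) = n • e1pow (n - 1) := by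
  induction n with
  | zero => rw [zero_smul]; exact dropLastOne_one
  | succ n ih =>
    rw [e1pow, isShuffleDerivation_dropLastOne, dropLastOne_wordOf_one, sh_one_left, ih,
      map_nsmul]
    cases n with
    | zero => simp
    | succ n => rw [Nat.add_sub_cancel, ← e1pow, Nat.add_sub_cancel, succ_nsmul' _ (n + 1)]

lemma dropLastOne_pow_sh_e1pow {x : Az} (hx : dropLastOne x = 0) (k i : ℕ) :
    (dropLastOne ^ k) (sh x (e1pow i)) = i.descFactorial k • sh x (e1pow (i - k)) := by
  induction k with
  | zero => simp
  | succ k ih =>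
    rw [pow_succ', Module.End.mul_apply, ih, map_nsmul, isShuffleDerivation_dropLastOne, hx,
      map_zero, LinearMap.zero_apply, zero_add, dropLastOne_e1pow, map_nsmul, smul_smul,
      Nat.descFactorial_succ, Nat.sub_sub, mul_comm]

theorem eq_zero_of_sum_sh_e1pow_eq_zero {h : ℕ →₀ Az} (hh : ∀ i, dropLastOne (h i) = 0)
    (hsum : (h.sum fun i x => sh x (e1pow i)) = 0) : h = 0 := by
  by_contra hne
  have hsupp : h.support.Nonempty := Finsupp.support_nonempty_iff.mpr hne
  set K := h.support.max' hsupp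
  have htop : (dropLastOne ^ K) (h.sum fun i x => sh x (e1pow i)) = K.factorial • h K := by
    rw [map_finsuppSum, Finsupp.sum_eq_single K]
    · rw [dropLastOne_pow_sh_e1pow (hh K), Nat.descFactorial_self, Nat.sub_self]
      exact congrArg _ (sh_one_right _)
    · intro i hi hiK
      have hiK : i < K := (h.support.le_max' i (Finsupp.mem_support_iff.mpr hi)).lt_of_ne hiK
      rw [dropLastOne_pow_sh_e1pow (hh i), Nat.descFactorial_eq_zero_iff_lt.mpr hiK, zero_smul]
    · simp
  have hcoeff : K.factorial • MonoidAlgebra.coeffLinearEquiv ℤ (h K) = 0 := by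
    rw [← map_nsmul, ← htop, hsum, map_zero, map_zero]
  have hK : h K = 0 := by simpa [K.factorial_ne_zero] using hcoeff
  exact Finsupp.mem_support_iff.mp (h.support.max'_mem hsupp) hK

theorem eq_of_sum_sh_e1pow_eq {f g : ℕ →₀ Az} (hf : ∀ i, dropLastOne (f i) = 0)
    (hg : ∀ i, dropLastOne (g i) = 0)
    (h : (f.sum fun i x => sh x (e1pow i)) = g.sum fun i x => sh x (e1pow i)) : f = g := by
  refine sub_eq_zero.mp (eq_zero_of_sum_sh_e1pow_eq_zero (fun i => ?_) ?_)
  · rw [Finsupp.sub_apply, map_sub, hf, hg, sub_zero]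
  · rw [Finsupp.sum_sub_index fun _ _ _ => by rw [map_sub, LinearMap.sub_apply], h, sub_self]

section DelFrom

variable (T : Finset Letter)

def pairIndicator (a b : Letter) : ℤ := if ({a, b} : Finset Letter) = T then 1 else 0

lemma pairIndicator_comm (a b : Letter) : pairIndicator T a b = pairIndicator T b a := by
  rw [pairIndicator, pairIndicator, Finset.pair_comm]

def extFrom (p : Letter) (l : List Letter) (j : ℕ) : Letter := (p :: l ++ [1]).getD j 1

/-- `∂_{α,β}` for `T = {α, β}`, with the left sentinel `a₀ = e₀` replaced by `p`. Removing the
first letter `a` of a word turns the sentinel into `a` (`delFrom_wordOf_cons`), which is why the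
derivation property is proved for all sentinels at once. -/
noncomputable def delFromWord (p : Letter) (l : List Letter) : Az :=
  ∑ i ∈ Finset.range l.length,
    (pairIndicator T (extFrom p l (i + 1)) (extFrom p l (i + 2)) -
      pairIndicator T (extFrom p l i) (extFrom p l (i + 1))) • wordOf (l.eraseIdx i)

noncomputable def delFrom (p : Letter) : Az →ₗ[ℤ] Az :=
  (Finsupp.lsum ℤ fun w => LinearMap.toSpanSingleton ℤ Az
    (delFromWord T p (FreeMonoid.toList w))) ∘ₗ (MonoidAlgebra.coeffLinearEquiv ℤ).toLinearMap

lemma del_eq_delFrom (α β : Letter) : del α β = delFrom {α, β} 0 := rfl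

lemma delFrom_wordOf (p : Letter) (l : List Letter) :
    delFrom T p (wordOf l) = delFromWord T p l := by
  simp [delFrom, wordOf]

lemma delFrom_one (p : Letter) : delFrom T p 1 = 0 := by
  rw [← wordOf_nil, delFrom_wordOf, delFromWord, List.length_nil, Finset.sum_range_zero]

lemma delFrom_wordOf_cons (p a : Letter) (l : List Letter) :
    delFrom T p (wordOf (a :: l)) =
      (pairIndicator T a (l.headD 1) - pairIndicator T p a) • wordOf l +
        prepend a (delFrom T a (wordOf l)) := by
  rw [delFrom_wordOf, delFrom_wordOf, delFromWord, List.length_cons, Finset.sum_range_succ',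
    add_comm]
  congr 1
  · cases l <;> rfl
  · rw [delFromWord, map_sum]
    refine Finset.sum_congr rfl fun i _ => ?_
    rw [map_zsmul, prepend_wordOf]
    rfl

noncomputable def headIndicator (q : Letter) : Az →ₗ[ℤ] Az :=
  (Finsupp.lsum ℤ fun w => LinearMap.toSpanSingleton ℤ Az
    (pairIndicator T q ((FreeMonoid.toList w).headD 1) • wordOf (FreeMonoid.toList w))) ∘ₗ
    (MonoidAlgebra.coeffLinearEquiv ℤ).toLinearMap

lemma headIndicator_wordOf (q : Letter) (l : List Letter) :
    headIndicator T q (wordOf l) = pairIndicator T q (l.headD 1) • wordOf l := by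
  simp [headIndicator, wordOf]

lemma headIndicator_prepend (q a : Letter) (x : Az) :
    headIndicator T q (prepend a x) = pairIndicator T q a • prepend a x :=
  LinearMap.congr_fun (linearMap_ext_wordOf (φ := headIndicator T q ∘ₗ prepend a)
    (ψ := pairIndicator T q a • prepend a) fun l => by
      simp [prepend_wordOf, headIndicator_wordOf]) x

lemma delFrom_prepend (p a : Letter) (x : Az) :
    delFrom T p (prepend a x) =
      headIndicator T a x - pairIndicator T p a • x + prepend a (delFrom T a x) := by
  have key : delFrom T p ∘ₗ prepend a =
      headIndicator T a - pairIndicator T p a • LinearMap.id + prepend a ∘ₗ delFrom T a :=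
    linearMap_ext_wordOf fun l => by
      rw [LinearMap.comp_apply, prepend_wordOf, delFrom_wordOf_cons, LinearMap.add_apply,
        LinearMap.sub_apply, LinearMap.smul_apply, LinearMap.id_apply, LinearMap.comp_apply,
        headIndicator_wordOf, sub_smul]
  simpa only [LinearMap.comp_apply, LinearMap.add_apply, LinearMap.sub_apply,
    LinearMap.smul_apply, LinearMap.id_apply] using LinearMap.congr_fun key x

lemma headIndicator_sh_wordOf_cons (q b : Letter) (u v : List Letter) :
    headIndicator T q (sh (wordOf u) (wordOf (b :: v))) =
      pairIndicator T q (u.headD 1) • sh (wordOf u) (wordOf (b :: v)) +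
        (pairIndicator T q b - pairIndicator T q (u.headD 1)) •
          prepend b (sh (wordOf u) (wordOf v)) := by
  rw [← prepend_wordOf b v]
  cases u with
  | nil =>
    rw [List.headD_nil, wordOf_nil, sh_one_left, sh_one_left, headIndicator_prepend, sub_smul]
    abel
  | cons a u =>
    rw [← prepend_wordOf, sh_prepend_prepend, map_add, headIndicator_prepend,
      headIndicator_prepend, List.headD_cons, smul_add, sub_smul]
    abel

lemma headIndicator_sh_cons_wordOf (q a : Letter) (u v : List Letter) :
    headIndicator T q (sh (wordOf (a :: u)) (wordOf v)) =
      pairIndicator T q (v.headD 1) • sh (wordOf (a :: u)) (wordOf v) +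
        (pairIndicator T q a - pairIndicator T q (v.headD 1)) •
          prepend a (sh (wordOf u) (wordOf v)) := by
  rw [sh_comm, headIndicator_sh_wordOf_cons, sh_comm (wordOf v), sh_comm (wordOf v)]

theorem isShuffleDerivation_delFrom (p : Letter) : IsShuffleDerivation (delFrom T p) := by
  suffices h : ∀ u v p, delFrom T p (sh (wordOf u) (wordOf v)) =
      sh (delFrom T p (wordOf u)) (wordOf v) + sh (wordOf u) (delFrom T p (wordOf v)) from
    .of_wordOf fun u v => h u v p
  refine shuffle_induction (fun v p => ?_) (fun u p => ?_) fun a b u v ih₁ ih₂ p => ?_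
  · rw [wordOf_nil, sh_one_left, delFrom_one, map_zero, LinearMap.zero_apply, zero_add,
      sh_one_left]
  · rw [wordOf_nil, sh_one_right, delFrom_one, map_zero, add_zero, sh_one_right]
  · rw [sh_wordOf_cons_cons, map_add, delFrom_prepend, delFrom_prepend,
      headIndicator_sh_wordOf_cons, headIndicator_sh_cons_wordOf, ih₁ a, ih₂ b,
      delFrom_wordOf_cons T a b, delFrom_wordOf_cons T b a, delFrom_wordOf_cons T p a,
      delFrom_wordOf_cons T p b, pairIndicator_comm T b a]
    simp only [← prepend_wordOf]
    simp only [map_add, map_sub, map_zsmul, LinearMap.add_apply, LinearMap.sub_apply,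
      LinearMap.smul_apply, sh_prepend_prepend, sub_smul]
    abel

end DelFrom

theorem isShuffleDerivation_del (α β : Letter) : IsShuffleDerivation (del α β) := by
  rw [del_eq_delFrom]
  exact isShuffleDerivation_delFrom _ 0

lemma del_wordOf (α β : Letter) (l : List Letter) : del α β (wordOf l) = Dword α β l := by
  simp [del, wordOf]

lemma del_two_e1pow (c : Letter) (n : ℕ) : del 2 c (e1pow n) = 0 := by
  refine (isShuffleDerivation_del 2 c).map_e1pow_eq_zero ?_ n
  have h : ∀ s : Finset Letter, (2 : Letter) ∉ s → s ≠ {2, c} :=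
    fun s hs h => hs (h ▸ Finset.mem_insert_self 2 {c})
  simp [del_wordOf, Dword, ext, h {1} (by decide), h {0, 1} (by decide)]

noncomputable def notEndingInOne : Submodule ℤ Az :=
  Submodule.span ℤ {x | ∃ l : List Letter, l.getLast? ≠ some 1 ∧ x = wordOf l}

lemma wordOf_mem_notEndingInOne {l : List Letter} (hl : l.getLast? ≠ some 1) :
    wordOf l ∈ notEndingInOne :=
  Submodule.subset_span ⟨l, hl, rfl⟩

lemma Az0_le_notEndingInOne : Az0 ≤ notEndingInOne :=
  Submodule.span_le.mpr fun _ ⟨l, hl, hx⟩ => hx ▸ wordOf_mem_notEndingInOne <| by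
    rcases hl with rfl | hl
    · simp
    · exact hl.2

lemma dropLastOne_eq_zero_of_mem {x : Az} (hx : x ∈ notEndingInOne) : dropLastOne x = 0 := by
  refine (Submodule.span_le (p := LinearMap.ker dropLastOne)).mpr ?_ hx
  rintro _ ⟨l, hl, rfl⟩
  rw [SetLike.mem_coe, LinearMap.mem_ker, dropLastOne_wordOf, if_neg hl]

lemma del_wordOf_mem_notEndingInOne (α β : Letter) {l : List Letter}
    (hl : l.getLast? ≠ some 1) : del α β (wordOf l) ∈ notEndingInOne := by
  rcases List.eq_nil_or_concat' l with rfl | ⟨m, x, rfl⟩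
  · simp [del_wordOf, Dword]
  rw [del_wordOf, Dword, List.length_append, List.length_singleton, Finset.sum_range_succ]
  refine Submodule.add_mem _ (Submodule.sum_mem _ fun i hi => Submodule.smul_mem _ _ ?_) ?_
  · rw [List.eraseIdx_append_of_lt_length (Finset.mem_range.mp hi)]
    exact wordOf_mem_notEndingInOne (by rwa [List.getLast?_concat] at hl ⊢)
  · rw [List.eraseIdx_append_of_length_le le_rfl, Nat.sub_self, List.eraseIdx_cons_zero,
      List.append_nil]
    by_cases hm : m.getLast? = some 1
    · -- erasing the last letter `x` exposes an `e₁`, but then both boundary pairs are `{e₁, x}`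
      obtain ⟨m, rfl⟩ := List.getLast?_eq_some_iff.mp hm
      simp [ext, Finset.pair_comm x 1]
    · exact Submodule.smul_mem _ _ (wordOf_mem_notEndingInOne hm)

lemma del_mem_notEndingInOne (α β : Letter) {x : Az} (hx : x ∈ notEndingInOne) :
    del α β x ∈ notEndingInOne := by
  refine (Submodule.span_le (p := notEndingInOne.comap (del α β))).mpr ?_ hx
  rintro _ ⟨l, hl, rfl⟩
  exact del_wordOf_mem_notEndingInOne α β hl

theorem stmt_17_general (c : Letter) (w : Az)
    (f g : ℕ →₀ Az)
    (hf0 : ∀ i, f i ∈ Az0) (hf : w = f.sum fun i wi => sh wi (e1pow i))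
    (hg0 : ∀ i, g i ∈ Az0)
    (hg : del 2 c w = g.sum fun i wi => sh wi (e1pow i)) :
    g 0 = del 2 c (f 0) := by
  have hdel : del 2 c w =
      (f.mapRange (del 2 c) (map_zero _)).sum fun i x => sh x (e1pow i) := by
    rw [hf, map_finsuppSum,
      Finsupp.sum_mapRange_index (h := fun i x => sh x (e1pow i)) fun _ => by simp]
    refine Finsupp.sum_congr fun i _ => ?_
    rw [isShuffleDerivation_del, del_two_e1pow, map_zero, add_zero]
  have key := eq_of_sum_sh_e1pow_eq
    (fun i => dropLastOne_eq_zero_of_mem (Az0_le_notEndingInOne (hg0 i)))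
    (fun i => dropLastOne_eq_zero_of_mem
      (del_mem_notEndingInOne 2 c (Az0_le_notEndingInOne (hf0 i))))
    (hg.symm.trans hdel)
  simpa using DFunLike.congr_fun key 0

/-- For `c ∈ {0,1}`, the shuffle regularization commutes with `∂_{z,c}`:
if `w = Σ_i f_i ⧢ e₁^{⧢ i}` and `∂_{z,c} w = Σ_i g_i ⧢ e₁^{⧢ i}` are the
regularized decompositions, then `g₀ = ∂_{z,c} f₀`. -/
theorem stmt_17 (c : Letter) (hc : c = 0 ∨ c = 1) (w : Az) (hw : w ∈ Az1)
    (f g : ℕ →₀ Az)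
    (hf0 : ∀ i, f i ∈ Az0) (hf : w = f.sum fun i wi => sh wi (e1pow i))
    (hg0 : ∀ i, g i ∈ Az0)
    (hg : del 2 c w = g.sum fun i wi => sh wi (e1pow i)) :
    g 0 = del 2 c (f 0) :=
  stmt_17_general c w f g hf0 hf hg0 hg
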